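/- arXiv:1512.04496 — 6 statements merged into one kernel-verified Lean document; each statement's English description precedes it below -/
import Mathlib

section
/- Let S be a nonempty set of pairwise coprime natural numbers ≥ 2, let N = ℤ[1/p : p ∈ S] ⊆ ℚ be the subring of ℚ generated by the inverses of elements of S, and let g = gcd{p − 1 : p ∈ S}. Then the quotient group N/gN is isomorphic to ℤ/gℤ. -/
/-!
`N` is the localization of `ℤ` at the monoid `M` generated by `S`, realised inside `ℚ`.
Every element of `M` is `≡ 1 (mod g)`, hence a unit of `ZMod g`, so reduction mod `g` extends to a
ring map `N → ZMod g` sending `a / m` to `a * m⁻¹`. It is surjective, and `a / m` lies in its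
kernel iff `g ∣ a`, i.e. iff `a / m ∈ gN`.
-/

open nonZeroDivisors

theorem Algebra.adjoin_inv_eq_ofField {A K : Type*} [CommRing A] [Field K] [Algebra A K]
    [IsFractionRing A K] (T : Set A) (hT : Submonoid.closure T ≤ A⁰) :
    Algebra.adjoin A {x : K | ∃ t ∈ T, x = (algebraMap A K t)⁻¹} =
      Localization.subalgebra.ofField K (Submonoid.closure T) hT := by
  apply le_antisymm
  · rw [Algebra.adjoin_le_iff]
    rintro _ ⟨t, ht, rfl⟩
    exact ⟨1, t, Submonoid.subset_closure ht, by rw [map_one, one_mul]⟩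
  · rintro _ ⟨a, s, hs, rfl⟩
    refine mul_mem (Subalgebra.algebraMap_mem _ a) ?_
    induction hs using Submonoid.closure_induction with
    | mem t ht => exact Algebra.subset_adjoin ⟨t, ht, rfl⟩
    | one => simp
    | mul s t _ _ hs ht =>
      rw [map_mul, mul_inv]
      exact mul_mem hs ht

namespace IsLocalization

variable {M : Submonoid ℤ} {L : Type*} [CommRing L] [Algebra ℤ L] [IsLocalization M L]
  {g : ℕ} (hM : ∀ m ∈ M, IsUnit (m : ZMod g))

noncomputable def toZMod : L →+* ZMod g :=
  lift (M := M) (g := Int.castRingHom (ZMod g)) fun m => hM m m.2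

theorem toZMod_surjective : Function.Surjective (toZMod hM : L →+* ZMod g) := by
  intro k
  obtain ⟨a, rfl⟩ := ZMod.intCast_surjective k
  exact ⟨algebraMap ℤ L a, lift_eq _ a⟩

theorem toZMod_eq_zero_iff (x : L) : toZMod hM x = 0 ↔ ∃ y : L, x = g • y := by
  constructor
  · intro hx
    obtain ⟨⟨a, m⟩, rfl⟩ := mk'_surjective M x
    rw [toZMod, lift_mk'_spec, mul_zero, eq_intCast, ZMod.intCast_zmod_eq_zero_iff_dvd] at hx
    obtain ⟨b, rfl⟩ := hx
    refine ⟨mk' L b m, ?_⟩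
    rw [nsmul_eq_mul, ← map_natCast (algebraMap ℤ L), mul_mk'_eq_mk'_of_mul]
  · rintro ⟨y, rfl⟩
    rw [map_nsmul, nsmul_eq_mul, ZMod.natCast_self, zero_mul]

include hM in
theorem nonempty_quotient_nsmul_addEquiv_zmod :
    Nonempty ((L ⧸ AddSubgroup.closure {x : L | ∃ y : L, x = g • y}) ≃+ ZMod g) := by
  have hker : AddSubgroup.closure {x : L | ∃ y : L, x = g • y} =
      (toZMod hM : L →+* ZMod g).toAddMonoidHom.ker := by
    refine le_antisymm (AddSubgroup.closure_le _ |>.mpr fun x hx => ?_) fun x hx => ?_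
    · exact (toZMod_eq_zero_iff hM x).mpr hx
    · exact AddSubgroup.subset_closure ((toZMod_eq_zero_iff hM x).mp hx)
  rw [hker]
  exact ⟨QuotientAddGroup.quotientKerEquivOfSurjective _ (toZMod_surjective hM)⟩

end IsLocalization

theorem ZMod.natCast_eq_one_of_dvd_sub_one {g p : ℕ} (hp : 1 ≤ p) (h : g ∣ p - 1) :
    (p : ZMod g) = 1 := by
  simpa using (ZMod.natCast_eq_natCast_iff p 1 g).mpr ((Nat.modEq_iff_dvd' hp).mpr h).symm

theorem stmt_3_general (S : Set ℕ) (h2 : ∀ p ∈ S, 2 ≤ p)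
    (g : ℕ) (hgdvd : ∀ p ∈ S, g ∣ p - 1)
    (N : Subring ℚ) (hN : N = Subring.closure {x : ℚ | ∃ p ∈ S, x = (p : ℚ)⁻¹}) :
    Nonempty ((N ⧸ AddSubgroup.closure {x : N | ∃ y : N, x = g • y}) ≃+ ZMod g) := by
  set M := Submonoid.closure (((↑) : ℕ → ℤ) '' S)
  have hM0 : M ≤ ℤ⁰ := Submonoid.closure_le.mpr <| by
    rintro _ ⟨p, hp, rfl⟩
    exact mem_nonZeroDivisors_of_ne_zero (by have := h2 p hp; omega)
  have hMunit : M ≤ (IsUnit.submonoid (ZMod g)).comap (Int.castRingHom (ZMod g)) :=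
    Submonoid.closure_le.mpr <| by
      rintro _ ⟨p, hp, rfl⟩
      show IsUnit ((p : ℤ) : ZMod g)
      rw [Int.cast_natCast, ZMod.natCast_eq_one_of_dvd_sub_one (by linarith [h2 p hp]) (hgdvd p hp)]
      exact isUnit_one
  have hNM : N = (Localization.subalgebra.ofField ℚ M hM0).toSubring := by
    rw [hN, ← Algebra.adjoin_inv_eq_ofField, Algebra.adjoin_int]
    congr 1
    ext x
    simp
  subst hNM
  exact IsLocalization.nonempty_quotient_nsmul_addEquiv_zmod (M := M)
    (L := Localization.subalgebra.ofField ℚ M hM0) fun m hm => hMunit hm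

/-- For a nonempty set `S` of pairwise coprime naturals `≥ 2`, `N = ℤ[1/p : p ∈ S] ⊆ ℚ`,
and `g = gcd {p − 1 : p ∈ S}`, the quotient group `N/gN` is isomorphic to `ℤ/gℤ`. -/
theorem stmt_3 (S : Set ℕ) (hS : S.Nonempty) (h2 : ∀ p ∈ S, 2 ≤ p)
    (hcop : ∀ p ∈ S, ∀ q ∈ S, p ≠ q → Nat.Coprime p q)
    (g : ℕ) (hgdvd : ∀ p ∈ S, g ∣ p - 1)
    (hgmax : ∀ d : ℕ, (∀ p ∈ S, d ∣ p - 1) → d ∣ g)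
    (N : Subring ℚ) (hN : N = Subring.closure {x : ℚ | ∃ p ∈ S, x = (p : ℚ)⁻¹}) :
    Nonempty ((N ⧸ AddSubgroup.closure {x : N | ∃ y : N, x = g • y}) ≃+ ZMod g) :=
  stmt_3_general S h2 g hgdvd N hN
end

section
/- Let S be a nonempty set of pairwise coprime natural numbers ≥ 2. Then the multiplicative submonoid H^+ of ℕ generated by S is freely generated by S as a commutative monoid: every element of H^+ has a unique representation as a finite product of elements of S (up to ordering), i.e., the canonical monoid homomorphism from the free commutative monoid on S (finitely supported functions S → ℕ) to ℕ× sending f to ∏_{p∈S} p^{f(p)} is injective. -/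
theorem key (S : Set ℕ) (h2 : ∀ p ∈ S, 2 ≤ p)
    (hcop : ∀ p ∈ S, ∀ q ∈ S, p ≠ q → Nat.Coprime p q)
    (f : ↥S →₀ ℕ) (p : ↥S) :
    (f.prod fun p n => (p : ℕ) ^ n).factorization (p : ℕ).minFac
      = f p * (p : ℕ).factorization (p : ℕ).minFac := by
  have hp2 : 2 ≤ (p : ℕ) := h2 p p.2
  have hq : (p : ℕ).minFac.Prime := Nat.minFac_prime (by omega)
  rw [Finsupp.prod, Nat.factorization_prod (fun r hr => pow_ne_zero _ (by have := h2 r r.2; omega))]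
  simp only [Nat.factorization_pow, Finsupp.smul_apply, Finset.sum_apply', smul_eq_mul]
  by_cases hp : p ∈ f.support
  · rw [Finset.sum_eq_single p]
    · intro r hr hrp
      have hcop' : Nat.Coprime (p : ℕ) r := hcop p p.2 r r.2 (by exact fun h => hrp (Subtype.ext h.symm))
      have : ¬ (p : ℕ).minFac ∣ (r : ℕ) := fun hd =>
        Nat.Prime.one_lt hq |>.ne' (Nat.eq_one_of_dvd_coprimes hcop' (Nat.minFac_dvd _) hd)
      rw [Nat.factorization_eq_zero_of_not_dvd this, mul_zero]
    · intro h; simp [Finsupp.notMem_support_iff.mp h]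
  · rw [Finsupp.notMem_support_iff.mp hp, zero_mul]
    apply Finset.sum_eq_zero
    intro r hr
    have hrp : r ≠ p := fun h => hp (h ▸ hr)
    have hcop' : Nat.Coprime (p : ℕ) r := hcop p p.2 r r.2 (fun h => hrp (Subtype.ext h.symm))
    have : ¬ (p : ℕ).minFac ∣ (r : ℕ) := fun hd =>
      Nat.Prime.one_lt hq |>.ne' (Nat.eq_one_of_dvd_coprimes hcop' (Nat.minFac_dvd _) hd)
    rw [Nat.factorization_eq_zero_of_not_dvd this, mul_zero]

/-- For a nonempty set `S` of pairwise coprime naturals `≥ 2`, the canonical monoid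
homomorphism from the free commutative monoid on `S` (finitely supported functions
`S → ℕ`) to `ℕ` sending `f` to `∏_{p ∈ S} p^(f p)` is injective. -/
theorem stmt_5 (S : Set ℕ) (hS : S.Nonempty) (h2 : ∀ p ∈ S, 2 ≤ p)
    (hcop : ∀ p ∈ S, ∀ q ∈ S, p ≠ q → Nat.Coprime p q) :
    Function.Injective (fun f : ↥S →₀ ℕ => f.prod fun p n => (p : ℕ) ^ n) := by
  intro f g h
  ext p
  have := congrArg (fun n => Nat.factorization n (p : ℕ).minFac) h
  simp only at this
  rw [key S h2 hcop f p, key S h2 hcop g p] at this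
  have hp2 : 2 ≤ (p : ℕ) := h2 p p.2
  have hq : (p : ℕ).minFac.Prime := Nat.minFac_prime (by omega)
  have hk : 0 < (p : ℕ).factorization (p : ℕ).minFac :=
    hq.factorization_pos_of_dvd (by omega) (Nat.minFac_dvd _)
  exact Nat.eq_of_mul_eq_mul_right hk this
end

section
/- Let a_1, …, a_k be integers, not all zero, with g = gcd(a_1, …, a_k), and let v = (a_1, …, a_k) ∈ ℤ^k. Consider h^p: Λ^p(ℤ^k) → Λ^{p+1}(ℤ^k), x ↦ v ∧ x. Then for every p ≥ 1, the quotient group ker(h^p)/im(h^{p−1}) is annihilated by g: if x ∈ Λ^p(ℤ^k) satisfies v ∧ x = 0, then g·x ∈ v ∧ Λ^{p−1}(ℤ^k). -/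
open ExteriorAlgebra

/-- Multivariate Bézout: the gcd of finitely many integers is an integer combination. -/
lemma bezout_finset {ι : Type*} [DecidableEq ι] (s : Finset ι) (f : ι → ℤ) :
    ∃ c : ι → ℤ, ∑ i ∈ s, c i * f i = ((s.gcd fun i => (f i).natAbs : ℕ) : ℤ) := by
  classical
  induction s using Finset.induction_on with
  | empty => exact ⟨0, by simp⟩
  | @insert a s ha ih =>
      obtain ⟨c, hc⟩ := ih
      set gs : ℤ := ((s.gcd fun i => (f i).natAbs : ℕ) : ℤ) with hgs
      refine ⟨Function.update (fun i => Int.gcdB (f a) gs * c i) a (Int.gcdA (f a) gs), ?_⟩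
      rw [Finset.sum_insert ha, Function.update_self]
      have hrest : ∑ i ∈ s, Function.update (fun i => Int.gcdB (f a) gs * c i) a
          (Int.gcdA (f a) gs) i * f i = Int.gcdB (f a) gs * gs := by
        rw [← hc, Finset.mul_sum]
        refine Finset.sum_congr rfl fun i hi => ?_
        rw [Function.update_of_ne (by rintro rfl; exact ha hi), mul_assoc]
      rw [hrest, Finset.gcd_insert]
      show _ = ((Nat.gcd (f a).natAbs (s.gcd fun i => (f i).natAbs) : ℕ) : ℤ)
      have : (Nat.gcd (f a).natAbs (s.gcd fun i => (f i).natAbs) : ℤ)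
          = Int.gcd (f a) gs := by
        simp [Int.gcd, hgs]
      rw [this, Int.gcd_eq_gcd_ab]
      ring

/-- Contraction lowers the exterior degree. -/
lemma contract_mem_exteriorPower {R M : Type*} [CommRing R] [AddCommGroup M] [Module R M]
    (d : Module.Dual R M) {p : ℕ} {x : ExteriorAlgebra R M} (hx : x ∈ ⋀[R]^p M) :
    CliffordAlgebra.contractLeft (Q := (0 : QuadraticForm R M)) d x ∈ ⋀[R]^(p - 1) M := by
  induction hx using Submodule.pow_induction_on_left' with
  | algebraMap r =>
      rw [CliffordAlgebra.contractLeft_algebraMap]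
      exact Submodule.zero_mem _
  | add x y i hx hy ihx ihy =>
      rw [map_add]; exact Submodule.add_mem _ ihx ihy
  | mem_mul m hm i x hx ih =>
      obtain ⟨a, rfl⟩ := hm
      rw [CliffordAlgebra.contractLeft_ι_mul]
      cases i with
      | zero =>
          rw [pow_zero] at hx
          obtain ⟨r, rfl⟩ := Submodule.mem_one.mp hx
          rw [CliffordAlgebra.contractLeft_algebraMap, mul_zero, sub_zero]
          exact Submodule.smul_mem _ _
            (by show _ ∈ LinearMap.range (ExteriorAlgebra.ι R) ^ 0
                rw [pow_zero]; exact Submodule.mem_one.mpr ⟨r, rfl⟩)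
      | succ j =>
          refine Submodule.sub_mem _ (Submodule.smul_mem _ _ ?_) ?_
          · simpa using hx
          · show _ ∈ LinearMap.range (ι R) ^ (j + 1)
            rw [pow_succ']
            exact Submodule.mul_mem_mul (LinearMap.mem_range_self _ a) ih

/-- Let `v = (a_1, …, a_k) ∈ ℤ^k` be nonzero with `g = gcd(a_1, …, a_k)`. Then the
cohomology of wedging with `v` is annihilated by `g`: if `x ∈ Λ^p(ℤ^k)`, `p ≥ 1`, and
`v ∧ x = 0`, then `g·x = v ∧ y` for some `y ∈ Λ^{p−1}(ℤ^k)`. -/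
theorem stmt_9 (k : ℕ) (v : Fin k → ℤ) (hv : v ≠ 0) (g : ℕ)
    (hg : Finset.univ.gcd (fun i => (v i).natAbs) = g)
    (p : ℕ) (hp : 1 ≤ p) (x : ExteriorAlgebra ℤ (Fin k → ℤ))
    (hx : x ∈ ⋀[ℤ]^p (Fin k → ℤ)) (hvx : ι ℤ v * x = 0) :
    ∃ y ∈ ⋀[ℤ]^(p - 1) (Fin k → ℤ), (g : ℤ) • x = ι ℤ v * y := by
  obtain ⟨c, hc⟩ := bezout_finset Finset.univ v
  rw [hg] at hc
  -- the dual functional `w ↦ ∑ c i * w i`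
  let d : Module.Dual ℤ (Fin k → ℤ) :=
    { toFun := fun w => ∑ i, c i * w i
      map_add' := fun w₁ w₂ => by simp [mul_add, Finset.sum_add_distrib]
      map_smul' := fun r w => by simp [Finset.mul_sum, mul_left_comm] }
  have hdv : d v = (g : ℤ) := hc
  refine ⟨CliffordAlgebra.contractLeft (Q := (0 : QuadraticForm ℤ (Fin k → ℤ))) d x,
    contract_mem_exteriorPower d hx, ?_⟩
  have key := CliffordAlgebra.contractLeft_ι_mul (Q := (0 : QuadraticForm ℤ (Fin k → ℤ)))
    (d := d) v x
  rw [hvx, map_zero, hdv] at key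
  linear_combination (norm := module) -key
end

section
/- Let a_1, …, a_k be integers with gcd equal to g, not all zero, and v = (a_1, …, a_k) ∈ ℤ^k with k ≥ 1. For the complex h^p: Λ^p(ℤ^k) → Λ^{p+1}(ℤ^k), x ↦ v ∧ x, the cohomology group ker(h^p)/im(h^{p−1}) is isomorphic to (ℤ/gℤ)^{C(k−1, p−1)} for 1 ≤ p ≤ k, and vanishes for all other p. -/
/-!
Write `v = g • w` with `g` the gcd of the entries. Bézout gives a functional `φ` with
`φ w = 1`, so `w` is the first vector `b 0` of a basis `b` of `ℤ^k`. In the induced basis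
`e_s` of the exterior powers, wedging with `v = g • b 0` kills `e_s` when `0 ∈ s` and sends
it to `g • e_{insert 0 s}` otherwise. Hence the cocycles of degree `p + 1` are spanned by the
`e_t` with `0 ∈ t`, the coboundaries are `g` times them, and the cohomology is a product of
copies of `ℤ/g` indexed by these `t`, of which there are `C(k - 1, p)`.
-/

open ExteriorAlgebra

/-- Wedging with `v` as a linear map `Λ^p(ℤ^k) → Λ^{p+1}(ℤ^k)`. -/
noncomputable def wedgeMul (k : ℕ) (v : Fin k → ℤ) (p : ℕ) :
    (⋀[ℤ]^p (Fin k → ℤ)) →ₗ[ℤ] (⋀[ℤ]^(p + 1) (Fin k → ℤ)) :=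
  LinearMap.codRestrict _
    ((LinearMap.mulLeft ℤ (ι ℤ v)).comp (⋀[ℤ]^p (Fin k → ℤ)).subtype)
    (fun x => by
      have h1 : (ι ℤ v : ExteriorAlgebra ℤ (Fin k → ℤ)) ∈ ⋀[ℤ]^1 (Fin k → ℤ) := by
        simp [pow_one]
      have := Submodule.mul_mem_mul h1 x.2
      rwa [show (⋀[ℤ]^1 (Fin k → ℤ) : Submodule ℤ (ExteriorAlgebra ℤ (Fin k → ℤ))) *
          ⋀[ℤ]^p (Fin k → ℤ) = ⋀[ℤ]^(p + 1) (Fin k → ℤ) from by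
        rw [← pow_add, add_comm]] at this)

open Set Set.powersetCard Module

namespace Set.powersetCard

variable {α : Type*} [DecidableEq α] {n : ℕ}

def insertEquiv (a : α) :
    {s : powersetCard α n // a ∉ s} ≃ {t : powersetCard α (n + 1) // a ∈ t} where
  toFun s := ⟨ofCard (s := insert a s.1.1) (by rw [Finset.card_insert_of_notMem s.2, s.1.2]),
    Finset.mem_insert_self a _⟩
  invFun t := ⟨ofCard (s := t.1.1.erase a)
      (by rw [Finset.card_erase_of_mem t.2, t.1.2, Nat.add_sub_cancel]),
    Finset.notMem_erase a _⟩
  left_inv s := Subtype.ext (Subtype.ext (Finset.erase_insert s.2))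
  right_inv t := Subtype.ext (Subtype.ext (Finset.insert_erase t.2))

theorem exists_insertEquiv_eq {a : α} {t : powersetCard α (n + 1)} (ht : a ∈ t) :
    ∃ s, (insertEquiv a s).1 = t :=
  ⟨_, congrArg Subtype.val ((insertEquiv a).apply_symm_apply ⟨t, ht⟩)⟩

theorem natCard_subtype_mem [Fintype α] (a : α) :
    Nat.card {t : powersetCard α (n + 1) // a ∈ t} = (Fintype.card α - 1).choose n := by
  have e : {t : powersetCard α (n + 1) // a ∈ t} ≃
      ((Finset.univ.powersetCard (n + 1)).filter ({a} ⊆ ·) : Finset (Finset α)) :=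
    (Equiv.subtypeSubtypeEquivSubtypeInter _ (a ∈ ·)).trans (Equiv.subtypeEquivRight fun s => by
      simp [Set.powersetCard.mem_iff])
  rw [Nat.card_congr e, Nat.card_eq_fintype_card, Fintype.card_coe,
    Finset.card_filter_powersetCard_subset _ _ _ (Finset.subset_univ _) (by simp),
    Finset.card_univ, Finset.card_singleton, Nat.add_sub_cancel]

end Set.powersetCard

theorem Finset.natCast_gcd_natAbs {ι : Type*} (s : Finset ι) (f : ι → ℤ) :
    ((s.gcd fun i => (f i).natAbs : ℕ) : ℤ) = s.gcd f := by
  classical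
  induction s using Finset.induction with
  | empty => simp
  | insert a s ha ih =>
    rw [Finset.gcd_insert, Finset.gcd_insert, ← ih, ← Int.coe_gcd, Int.gcd_def,
      Int.natAbs_natCast]
    rfl

theorem Int.exists_eq_gcd_smul_dual_eq_one {ι : Type*} [Fintype ι] {v : ι → ℤ}
    (hv : v ≠ 0) :
    ∃ w : ι → ℤ, ∃ φ : Dual ℤ (ι → ℤ),
      v = ((Finset.univ.gcd fun i => (v i).natAbs : ℕ) : ℤ) • w ∧ φ w = 1 := by
  rw [Finset.natCast_gcd_natAbs]
  obtain ⟨c, hc⟩ := Finset.gcd_eq_sum_mul Finset.univ v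
  choose w hw using fun i => Finset.gcd_dvd (s := Finset.univ) (f := v) (Finset.mem_univ i)
  have hv' : v = Finset.univ.gcd v • w := funext hw
  have hg : Finset.univ.gcd v ≠ 0 :=
    fun h => hv (funext fun i => Finset.gcd_eq_zero_iff.1 h i (Finset.mem_univ i))
  refine ⟨w, Fintype.linearCombination ℤ c, hv', mul_left_cancel₀ hg ?_⟩
  calc Finset.univ.gcd v * Fintype.linearCombination ℤ c w
      = Fintype.linearCombination ℤ c v := by
        conv_rhs => rw [hv', map_smul, smul_eq_mul]
    _ = Finset.univ.gcd v * 1 := by simp [Fintype.linearCombination_apply, hc, mul_comm]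

theorem Module.Basis.exists_fin_succ_apply_zero_eq {R M : Type*} [CommRing R] [IsDomain R]
    [IsPrincipalIdealRing R] [AddCommGroup M] [Module R M] [Free R M] [Module.Finite R M]
    {φ : Dual R M} {w : M} (hw : φ w = 1) :
    ∃ (n : ℕ) (b : Basis (Fin (n + 1)) R M), b 0 = w := by
  obtain ⟨n, bN⟩ := Submodule.basisOfPid (Free.chooseBasis R M) (LinearMap.ker φ)
  refine ⟨n, Basis.mkFinCons w bN (fun c x hx hcx => ?_) (fun z => ⟨-φ z, ?_⟩), by simp⟩
  · simpa [LinearMap.mem_ker.1 hx, hw] using congrArg φ hcx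
  · simp [hw]

namespace ExteriorAlgebra

variable {R M : Type*} [CommRing R] [AddCommGroup M] [Module R M] {I : Type*} [LinearOrder I]

theorem ι_mul_ιMulti (x : M) {n : ℕ} (v : Fin n → M) :
    ι R x * ιMulti R n v = ιMulti R (n + 1) (Fin.cons x v) := by
  rw [ιMulti_succ_apply, Fin.cons_zero]
  rfl

theorem ι_mul_ιMulti_family_of_mem (b : I → M) {n : ℕ} {s : powersetCard I n} {i : I}
    (hi : i ∈ s) : ι R (b i) * ιMulti_family R n b s = 0 := by
  obtain ⟨j, hj⟩ := (mem_range_ofFinEmbEquiv_symm_iff_mem s i).mpr hi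
  rw [ι_mul_ιMulti]
  refine ιMulti_eq_zero_of_not_inj fun hinj => Fin.succ_ne_zero j (hinj ?_)
  simp [hj]

theorem ι_mul_ιMulti_family_of_notMem (b : I → M) {n : ℕ} {s : powersetCard I n} {i : I}
    (hmin : ∀ j, i ≤ j) (hi : i ∉ s) :
    ι R (b i) * ιMulti_family R n b s =
      ιMulti_family R (n + 1) b (insertEquiv i ⟨s, hi⟩).1 := by
  rw [ι_mul_ιMulti]
  -- `i` is the least index, so `b i` already stands first in the sorted wedge: no sign appears.
  have hsort : (Fin.cons i (ofFinEmbEquiv.symm s) : Fin (n + 1) → I) =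
      ofFinEmbEquiv.symm (insertEquiv i ⟨s, hi⟩).1 := by
    refine Finset.orderEmbOfFin_unique _ (fun j => ?_) ?_
    · refine Fin.cases (Finset.mem_insert_self i _) (fun j => ?_) j
      exact Finset.mem_insert_of_mem (Finset.orderEmbOfFin_mem s.1 s.2 j)
    · refine Fin.strictMono_cons.2
        ⟨fun j => (hmin _).lt_of_ne fun h => ?_, (ofFinEmbEquiv.symm s).strictMono⟩
      exact hi (h ▸ Finset.orderEmbOfFin_mem s.1 s.2 j)
  rw [ιMulti_family, ← hsort, Fin.comp_cons]

end ExteriorAlgebra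

namespace exteriorPower

variable {R M : Type*} [CommRing R] [AddCommGroup M] [Module R M]

theorem ι_mul_mem {x : M} {p : ℕ} {y : ExteriorAlgebra R M} (hy : y ∈ ⋀[R]^p M) :
    ι R x * y ∈ ⋀[R]^(p + 1) M := by
  rw [exteriorPower, pow_succ']
  exact Submodule.mul_mem_mul (LinearMap.mem_range_self _ x) hy

variable (R) in
noncomputable def wedgeLeft (x : M) (p : ℕ) : ⋀[R]^p M →ₗ[R] ⋀[R]^(p + 1) M :=
  LinearMap.codRestrict _ ((LinearMap.mulLeft R (ι R x)).comp (⋀[R]^p M).subtype)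
    fun y => ι_mul_mem y.2

@[simp]
theorem coe_wedgeLeft (x : M) {p : ℕ} (y : ⋀[R]^p M) :
    (wedgeLeft R x p y : ExteriorAlgebra R M) = ι R x * y := rfl

variable {I : Type*} [LinearOrder I] (b : Basis I R M) {i₀ : I} (g : R) {p : ℕ}

theorem wedgeLeft_basis_of_mem {s : powersetCard I p} (hs : i₀ ∈ s) :
    wedgeLeft R (g • b i₀) p (b.exteriorPower p s) = 0 := by
  ext1
  rw [coe_wedgeLeft, basis_apply, ιMulti_family_apply_coe, map_smul, smul_mul_assoc,
    ι_mul_ιMulti_family_of_mem _ hs, smul_zero, ZeroMemClass.coe_zero]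

theorem wedgeLeft_basis_of_notMem (hmin : ∀ j, i₀ ≤ j) {s : powersetCard I p}
    (hs : i₀ ∉ s) :
    wedgeLeft R (g • b i₀) p (b.exteriorPower p s) =
      g • b.exteriorPower (p + 1) (insertEquiv i₀ ⟨s, hs⟩).1 := by
  ext1
  rw [coe_wedgeLeft, basis_apply, basis_apply, ιMulti_family_apply_coe, map_smul,
    smul_mul_assoc, ι_mul_ιMulti_family_of_notMem _ hmin hs, Submodule.coe_smul,
    ιMulti_family_apply_coe]

theorem repr_wedgeLeft_of_notMem (hmin : ∀ j, i₀ ≤ j) (x : ⋀[R]^p M)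
    {t : powersetCard I (p + 1)} (ht : i₀ ∉ t) :
    (b.exteriorPower (p + 1)).repr (wedgeLeft R (g • b i₀) p x) t = 0 := by
  suffices (b.exteriorPower (p + 1)).coord t ∘ₗ wedgeLeft R (g • b i₀) p = 0 from
    LinearMap.congr_fun this x
  refine (b.exteriorPower p).ext fun s => ?_
  rw [LinearMap.comp_apply, LinearMap.zero_apply]
  by_cases hs : i₀ ∈ s
  · rw [wedgeLeft_basis_of_mem b g hs, map_zero]
  · rw [wedgeLeft_basis_of_notMem b g hmin hs, map_smul, Basis.coord_apply,
      Basis.repr_self, Finsupp.single_eq_of_ne, smul_zero]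
    exact fun h => ht (h ▸ (insertEquiv i₀ ⟨s, hs⟩).2)

theorem repr_wedgeLeft_insert (hmin : ∀ j, i₀ ≤ j) (x : ⋀[R]^p M)
    (s : {s : powersetCard I p // i₀ ∉ s}) :
    (b.exteriorPower (p + 1)).repr (wedgeLeft R (g • b i₀) p x) (insertEquiv i₀ s).1 =
      g * (b.exteriorPower p).repr x s.1 := by
  suffices
      (b.exteriorPower (p + 1)).coord (insertEquiv i₀ s).1 ∘ₗ wedgeLeft R (g • b i₀) p =
        g • (b.exteriorPower p).coord s.1 from
    LinearMap.congr_fun this x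
  refine (b.exteriorPower p).ext fun u => ?_
  rw [LinearMap.comp_apply, LinearMap.smul_apply, Basis.coord_apply,
    Basis.coord_apply, Basis.repr_self]
  by_cases hu : i₀ ∈ u
  · rw [wedgeLeft_basis_of_mem b g hu, map_zero, Finsupp.zero_apply, Finsupp.single_eq_of_ne,
      smul_zero]
    exact fun (h : s.1 = u) => s.2 (h ▸ hu)
  · rw [wedgeLeft_basis_of_notMem b g hmin hu, map_smul, Basis.repr_self,
      Finsupp.smul_apply, Finsupp.single_apply, Finsupp.single_apply]
    congr 1
    refine if_congr ⟨fun h => ?_, fun h => ?_⟩ rfl rfl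
    · exact congrArg Subtype.val ((insertEquiv i₀).injective (Subtype.ext h))
    · subst h; rfl

theorem wedgeLeft_eq_zero (hmin : ∀ j, i₀ ≤ j) {x : ⋀[R]^p M}
    (hx : ∀ s : powersetCard I p, i₀ ∉ s → (b.exteriorPower p).repr x s = 0) :
    wedgeLeft R (g • b i₀) p x = 0 := by
  refine (b.exteriorPower (p + 1)).ext_elem fun t => ?_
  rw [map_zero, Finsupp.zero_apply]
  by_cases ht : i₀ ∈ t
  · obtain ⟨s, rfl⟩ := exists_insertEquiv_eq ht
    rw [repr_wedgeLeft_insert b g hmin, hx s.1 s.2, mul_zero]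
  · exact repr_wedgeLeft_of_notMem b g hmin x ht

theorem wedgeLeft_eq_zero_iff (hmin : ∀ j, i₀ ≤ j) (hg : IsLeftRegular g) (x : ⋀[R]^p M) :
    wedgeLeft R (g • b i₀) p x = 0 ↔
      ∀ s : powersetCard I p, i₀ ∉ s → (b.exteriorPower p).repr x s = 0 := by
  refine ⟨fun hx s hs => ?_, wedgeLeft_eq_zero b g hmin⟩
  have h := repr_wedgeLeft_insert b g hmin x ⟨s, hs⟩
  rwa [hx, map_zero, Finsupp.zero_apply, eq_comm, hg.mul_left_eq_zero_iff] at h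

theorem mem_range_wedgeLeft_iff [Finite I] (hmin : ∀ j, i₀ ≤ j) {x : ⋀[R]^(p + 1) M}
    (hx : ∀ t : powersetCard I (p + 1), i₀ ∉ t → (b.exteriorPower (p + 1)).repr x t = 0) :
    x ∈ LinearMap.range (wedgeLeft R (g • b i₀) p) ↔
      ∀ t : powersetCard I (p + 1), i₀ ∈ t → g ∣ (b.exteriorPower (p + 1)).repr x t := by
  classical
  constructor
  · rintro ⟨z, rfl⟩ t ht
    obtain ⟨s, rfl⟩ := exists_insertEquiv_eq ht
    rw [repr_wedgeLeft_insert b g hmin]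
    exact dvd_mul_right _ _
  · intro hdvd
    choose c hc using fun s : {s : powersetCard I p // i₀ ∉ s} => hdvd _ (insertEquiv i₀ s).2
    refine ⟨(b.exteriorPower p).equivFun.symm
        fun s => if hs : i₀ ∈ s then 0 else c ⟨s, hs⟩,
      (b.exteriorPower (p + 1)).ext_elem fun t => ?_⟩
    by_cases ht : i₀ ∈ t
    · obtain ⟨s, rfl⟩ := exists_insertEquiv_eq ht
      rw [repr_wedgeLeft_insert b g hmin, ← Basis.coord_apply,
        Basis.coord_equivFun_symm, dif_neg s.2, hc]
    · rw [repr_wedgeLeft_of_notMem b g hmin _ ht, hx t ht]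

variable (i₀) in
noncomputable def cocycleReduction (p : ℕ) :
    LinearMap.ker (wedgeLeft R (g • b i₀) (p + 1)) →ₗ[R]
      ({t : powersetCard I (p + 1) // i₀ ∈ t} → R ⧸ Ideal.span {g}) :=
  (LinearMap.pi fun t => (Ideal.span {g}).mkQ ∘ₗ (b.exteriorPower (p + 1)).coord t.1) ∘ₗ
    (LinearMap.ker (wedgeLeft R (g • b i₀) (p + 1))).subtype

theorem cocycleReduction_surjective [Finite I] (hmin : ∀ j, i₀ ≤ j) (p : ℕ) :
    Function.Surjective (cocycleReduction b i₀ g p) := by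
  classical
  intro y
  choose c hc using fun t => Ideal.Quotient.mk_surjective (y t)
  set x := (b.exteriorPower (p + 1)).equivFun.symm
    fun t => if ht : i₀ ∈ t then c ⟨t, ht⟩ else 0
  have hx : ∀ t, (b.exteriorPower (p + 1)).repr x t =
      if ht : i₀ ∈ t then c ⟨t, ht⟩ else 0 :=
    fun t => by rw [← Basis.coord_apply, Basis.coord_equivFun_symm]
  refine ⟨⟨x, wedgeLeft_eq_zero b g hmin fun t ht => by rw [hx, dif_neg ht]⟩,
    funext fun t => ?_⟩
  simp only [cocycleReduction, LinearMap.comp_apply, LinearMap.pi_apply, Submodule.coe_subtype,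
    Basis.coord_apply, hx, dif_pos t.2]
  exact hc t

theorem ker_cocycleReduction [Finite I] (hmin : ∀ j, i₀ ≤ j) (hg : IsLeftRegular g)
    (p : ℕ) :
    LinearMap.ker (cocycleReduction b i₀ g p) =
      (LinearMap.range (wedgeLeft R (g • b i₀) p)).comap
        (LinearMap.ker (wedgeLeft R (g • b i₀) (p + 1))).subtype := by
  ext ⟨x, hx⟩
  rw [Submodule.mem_comap, Submodule.coe_subtype,
    mem_range_wedgeLeft_iff b g hmin ((wedgeLeft_eq_zero_iff b g hmin hg x).1 hx),
    LinearMap.mem_ker, funext_iff]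
  simp only [cocycleReduction, LinearMap.comp_apply, LinearMap.pi_apply, Submodule.coe_subtype,
    Basis.coord_apply, Pi.zero_apply, Submodule.mkQ_apply, Submodule.Quotient.mk_eq_zero,
    Ideal.mem_span_singleton]
  exact ⟨fun h t ht => h ⟨t, ht⟩, fun h t => h t.1 t.2⟩

theorem ker_wedgeLeft_zero (hmin : ∀ j, i₀ ≤ j) (hg : IsLeftRegular g) :
    LinearMap.ker (wedgeLeft R (g • b i₀) 0) = ⊥ :=
  (Submodule.eq_bot_iff _).2 fun x hx => (b.exteriorPower 0).ext_elem fun s => by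
    rw [map_zero, Finsupp.zero_apply]
    refine (wedgeLeft_eq_zero_iff b g hmin hg x).1 hx s fun hs => ?_
    simpa [s.2] using (Finset.card_pos.2 ⟨i₀, hs⟩)

end exteriorPower

open exteriorPower

-- Stated for `wedgeMul` rather than for its definitional twin `wedgeLeft ℤ`: the ring instances
-- that `wedgeLeft ℤ` inherits from a general `CommRing` block the search for the quotient
-- instance on its kernel.
noncomputable def wedgeMul.cohomologyEquiv {k : ℕ} {I : Type*} [LinearOrder I] [Finite I]
    (b : Basis I ℤ (Fin k → ℤ)) {i₀ : I} (hmin : ∀ j, i₀ ≤ j) {g : ℤ}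
    (hg : IsLeftRegular g) (p : ℕ) :
    (LinearMap.ker (wedgeMul k (g • b i₀) (p + 1)) ⧸
        Submodule.comap (LinearMap.ker (wedgeMul k (g • b i₀) (p + 1))).subtype
          (LinearMap.range (wedgeMul k (g • b i₀) p))) ≃ₗ[ℤ]
      ({t : powersetCard I (p + 1) // i₀ ∈ t} → ℤ ⧸ Ideal.span {g}) :=
  (Submodule.quotEquivOfEq _ _ (ker_cocycleReduction b g hmin hg p).symm).trans
    ((cocycleReduction b i₀ g p).quotKerEquivOfSurjective
      (cocycleReduction_surjective b g hmin p))

theorem stmt_10_general (k : ℕ) (v : Fin k → ℤ) (hv : v ≠ 0) (g : ℕ)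
    (hg : Finset.univ.gcd (fun i => (v i).natAbs) = g) :
    (∀ q : ℕ, q + 1 ≤ k →
      Nonempty ((LinearMap.ker (wedgeMul k v (q + 1)) ⧸
          Submodule.comap (LinearMap.ker (wedgeMul k v (q + 1))).subtype
            (LinearMap.range (wedgeMul k v q)))
        ≃+ (Fin (Nat.choose (k - 1) q) → ZMod g))) ∧
    LinearMap.ker (wedgeMul k v 0) = ⊥ ∧
    (∀ q : ℕ, k < q + 1 →
      Subsingleton (LinearMap.ker (wedgeMul k v (q + 1)) ⧸
          Submodule.comap (LinearMap.ker (wedgeMul k v (q + 1))).subtype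
            (LinearMap.range (wedgeMul k v q)))) := by
  obtain ⟨w, φ, hvw, hφ⟩ := Int.exists_eq_gcd_smul_dual_eq_one hv
  obtain ⟨n, b, rfl⟩ := Basis.exists_fin_succ_apply_zero_eq hφ
  rw [hg] at hvw
  subst hvw
  have hreg : IsLeftRegular (g : ℤ) :=
    (IsRegular.of_ne_zero fun h => hv (by rw [h, zero_smul])).left
  have hmin : ∀ j : Fin (n + 1), 0 ≤ j := Fin.zero_le
  have hk : k = n + 1 := by
    simpa only [finrank_fin_fun, Fintype.card_fin] using finrank_eq_card_basis b
  have H : ∀ q, Nonempty ((LinearMap.ker (wedgeMul k ((g : ℤ) • b 0) (q + 1)) ⧸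
      Submodule.comap (LinearMap.ker (wedgeMul k ((g : ℤ) • b 0) (q + 1))).subtype
        (LinearMap.range (wedgeMul k ((g : ℤ) • b 0) q))) ≃+
      (Fin ((k - 1).choose q) → ZMod g)) := fun q =>
    ⟨(wedgeMul.cohomologyEquiv b hmin hreg q).toAddEquiv.trans <| AddEquiv.arrowCongr
      (Finite.equivFinOfCardEq <| by
        rw [natCard_subtype_mem, Fintype.card_fin, hk])
      (Int.quotientSpanNatEquivZMod g).toAddEquiv⟩
  refine ⟨fun q _ => H q, ker_wedgeLeft_zero b _ hmin hreg, fun q hq => ?_⟩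
  obtain ⟨e⟩ := H q
  rw [Nat.choose_eq_zero_of_lt (by omega)] at e
  exact e.toEquiv.subsingleton

/-- The Koszul-type complex of wedging with `v = (a_1, …, a_k) ∈ ℤ^k`, `g = gcd(a_i)`,
has cohomology `ker(h^p)/im(h^{p−1}) ≅ (ℤ/gℤ)^{C(k−1, p−1)}` for `1 ≤ p ≤ k`
(here `p = q + 1`), and vanishing cohomology for all other `p`. -/
theorem stmt_10 (k : ℕ) (hk : 1 ≤ k) (v : Fin k → ℤ) (hv : v ≠ 0) (g : ℕ)
    (hg : Finset.univ.gcd (fun i => (v i).natAbs) = g) :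
    (∀ q : ℕ, q + 1 ≤ k →
      Nonempty ((LinearMap.ker (wedgeMul k v (q + 1)) ⧸
          Submodule.comap (LinearMap.ker (wedgeMul k v (q + 1))).subtype
            (LinearMap.range (wedgeMul k v q)))
        ≃+ (Fin (Nat.choose (k - 1) q) → ZMod g))) ∧
    LinearMap.ker (wedgeMul k v 0) = ⊥ ∧
    (∀ q : ℕ, k < q + 1 →
      Subsingleton (LinearMap.ker (wedgeMul k v (q + 1)) ⧸
          Submodule.comap (LinearMap.ker (wedgeMul k v (q + 1))).subtype
            (LinearMap.range (wedgeMul k v q)))) :=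
  stmt_10_general k v hv g hg
end

section
/- Let h ≥ 1 be a natural number. In the monoid ℕ ⋊ H^+ with multiplication (m, a)(n, b) = (m + a·n, a·b), where H^+ is a submonoid of the positive integers containing h, the right ideals (m, h)(ℕ ⋊ H^+) for m = 0, 1, …, h−1 are pairwise disjoint and their union contains, for every element (n, a) of ℕ ⋊ H^+, a common right multiple: for each (n, a) there exists some 0 ≤ m ≤ h−1 with (n, a)(ℕ ⋊ H^+) ∩ (m, h)(ℕ ⋊ H^+) ≠ ∅. -/
/-- The principal right ideal `(m, a)(ℕ ⋊ H⁺)` of the monoid `ℕ ⋊ H⁺`, where the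
multiplication is `(m, a)(n, b) = (m + a·n, a·b)`. -/
def rIdeal (H : Submonoid ℕ) (m a : ℕ) : Set (ℕ × ℕ) :=
  {x | ∃ n : ℕ, ∃ b ∈ H, x = (m + a * n, a * b)}

/-- In `ℕ ⋊ H⁺` with `h ∈ H⁺`, the right ideals `(m, h)(ℕ ⋊ H⁺)` for `0 ≤ m ≤ h−1` are
pairwise disjoint, and every element `(n, a)` has a common right multiple with some
`(m, h)`: the right ideals of `(n, a)` and of `(m, h)` intersect. -/
theorem stmt_13 (H : Submonoid ℕ) (hpos : ∀ a ∈ H, 0 < a)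
    (h : ℕ) (hh : 1 ≤ h) (hhH : h ∈ H) :
    (∀ m m' : ℕ, m < h → m' < h → m ≠ m' →
      rIdeal H m h ∩ rIdeal H m' h = ∅) ∧
    (∀ n a : ℕ, a ∈ H → ∃ m : ℕ, m < h ∧ (rIdeal H n a ∩ rIdeal H m h).Nonempty) := by
  constructor
  · intro m m' hm hm' hne
    ext x
    simp only [Set.mem_inter_iff, Set.mem_empty_iff_false, iff_false]
    rintro ⟨⟨n, b, hb, rfl⟩, ⟨n', b', hb', hx⟩⟩
    have h1 : m + h * n = m' + h * n' := congrArg Prod.fst hx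
    apply hne
    have := congrArg (· % h) h1
    simpa [Nat.add_mul_mod_self_left, Nat.mod_eq_of_lt hm, Nat.mod_eq_of_lt hm'] using this
  · intro n a haH
    refine ⟨n % h, Nat.mod_lt _ hh, (n, a * h), ⟨0, h, hhH, by simp⟩, n / h, a, haH, ?_⟩
    rw [Nat.mul_comm h a]
    congr 1
    exact (Nat.mod_add_div n h).symm
end

section
/- Let H^+ be a submonoid of the positive integers and let U = {(m, h) ∈ ℕ ⋊ H^+ : 0 ≤ m ≤ h−1} be the subset of the monoid ℕ ⋊ H^+ (with multiplication (m, a)(n, b) = (m + a·n, a·b)). Then U is a submonoid, and for all u, u′ ∈ U, uU ∩ u′U = (u(ℕ ⋊ H^+) ∩ u′(ℕ ⋊ H^+)) ∩ U. In particular U is again a right LCM semigroup. -/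
/-- The subset `U = {(m, h) ∈ ℕ ⋊ H⁺ : 0 ≤ m ≤ h − 1}`. -/
def Uset (H : Submonoid ℕ) : Set (ℕ × ℕ) :=
  {x | x.2 ∈ H ∧ x.1 < x.2}

/-- The principal right ideal `u·U` of `u = (m, a)` within the submonoid `U`. -/
def rIdealU (H : Submonoid ℕ) (m a : ℕ) : Set (ℕ × ℕ) :=
  {x | ∃ n b : ℕ, b ∈ H ∧ n < b ∧ x = (m + a * n, a * b)}

/-- `U = {(m, h) ∈ ℕ ⋊ H⁺ : 0 ≤ m ≤ h−1}` is a submonoid of `ℕ ⋊ H⁺`, and for all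
`u, u′ ∈ U` one has `uU ∩ u′U = (u(ℕ ⋊ H⁺) ∩ u′(ℕ ⋊ H⁺)) ∩ U`. -/
theorem stmt_15 (H : Submonoid ℕ) (hpos : ∀ a ∈ H, 0 < a) :
    ((0, 1) ∈ Uset H) ∧
    (∀ m a n b : ℕ, (m, a) ∈ Uset H → (n, b) ∈ Uset H →
      (m + a * n, a * b) ∈ Uset H) ∧
    (∀ m a m' a' : ℕ, (m, a) ∈ Uset H → (m', a') ∈ Uset H →
      rIdealU H m a ∩ rIdealU H m' a'
        = (rIdeal H m a ∩ rIdeal H m' a') ∩ Uset H) := by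
  have key : ∀ m a : ℕ, (m, a) ∈ Uset H →
      rIdealU H m a = rIdeal H m a ∩ Uset H := by
    rintro m a ⟨haH, hma⟩
    ext x
    constructor
    · rintro ⟨n, b, hb, hnb, rfl⟩
      refine ⟨⟨n, b, hb, rfl⟩, H.mul_mem haH hb, ?_⟩
      simp only
      calc m + a * n < a + a * n := by omega
        _ ≤ a + a * (b - 1) := by
            have : n ≤ b - 1 := by omega
            exact Nat.add_le_add_left (Nat.mul_le_mul_left a this) a
        _ = a * b := by
            have hb1 : 1 ≤ b := hpos b hb
            have : a ≤ a * b := Nat.le_mul_of_pos_right a hb1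
            rw [Nat.mul_sub, Nat.mul_one]
            omega
    · rintro ⟨⟨n, b, hb, rfl⟩, _, hlt⟩
      refine ⟨n, b, hb, ?_, rfl⟩
      simp only at hlt
      have ha : 0 < a := hpos a haH
      nlinarith
  refine ⟨⟨H.one_mem, Nat.zero_lt_one⟩, ?_, ?_⟩
  · rintro m a n b ⟨haH, hma⟩ ⟨hbH, hnb⟩
    refine ⟨H.mul_mem haH hbH, ?_⟩
    simp only
    have hb1 : 1 ≤ b := hpos b hbH
    nlinarith
  · intro m a m' a' hu hu'
    rw [key m a hu, key m' a' hu']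
    ext x
    simp only [Set.mem_inter_iff]
    tauto
end
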